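/- A ring R is left Noetherian if and only if every weak injective R-module is Gorenstein weak injective. -/

import Mathlib

open CategoryTheory

universe u

noncomputable section

variable (R : Type u) [Ring R]

/-- Vanishing of `Ext^n_R(N, M)` for left `R`-modules, expressed via the `Ext` bifunctor
on the `ℤ`-linear abelian category `ModuleCat R`. -/
def ExtVanish (n : ℕ) (N M : ModuleCat.{u} R) : Prop :=
  Subsingleton (((_root_.Ext ℤ (ModuleCat.{u} R) n).obj (Opposite.op N)).obj M)

/-- An `R`-module is super finitely presented if it admits a resolution by
finitely generated projective modules. -/
def SuperFinitelyPresented (N : ModuleCat.{u} R) : Prop :=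
  ∃ (F : ℕ → ModuleCat.{u} R) (d : ∀ n, F (n + 1) →ₗ[R] F n) (ε : F 0 →ₗ[R] N),
    (∀ n, Module.Finite R (F n)) ∧ (∀ n, Module.Projective R (F n)) ∧
    Function.Surjective ε ∧ Function.Exact (d 0) ε ∧
    (∀ n, Function.Exact (d (n + 1)) (d n))

/-- An `R`-module `W` is weak injective if `Ext^1_R(N, W) = 0` for every super finitely
presented module `N`. -/
def WeakInjective (W : ModuleCat.{u} R) : Prop :=
  ∀ N : ModuleCat.{u} R, SuperFinitelyPresented R N → ExtVanish R 1 N W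

/-- `wid_R M ≤ n` : `Ext^{n+1}_R(N, M) = 0` for every super finitely presented `N`. -/
def WidLE (M : ModuleCat.{u} R) (n : ℕ) : Prop :=
  ∀ N : ModuleCat.{u} R, SuperFinitelyPresented R N → ExtVanish R (n + 1) N M

/-- The weak injective dimension, as an element of `ℕ∞`. -/
def Wid (M : ModuleCat.{u} R) : ℕ∞ :=
  sInf {c : ℕ∞ | ∃ n : ℕ, c = n ∧ WidLE R M n}

/-- A doubly infinite exact complex of injective modules which stays exact after applying
`Hom_R(W, -)` for every module `W` in the test class `𝒯`. -/
def IsTotallyAcyclicInjComplex (𝒯 : ModuleCat.{u} R → Prop)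
    (I : ℤ → ModuleCat.{u} R) (d : ∀ n : ℤ, I n →ₗ[R] I (n + 1)) : Prop :=
  (∀ n, Module.Injective R (I n)) ∧
  (∀ n, Function.Exact (d n) (d (n + 1))) ∧
  (∀ W : ModuleCat.{u} R, 𝒯 W → ∀ n,
    Function.Exact (fun g : W →ₗ[R] I n => (d n).comp g)
      (fun g : W →ₗ[R] I (n + 1) => (d (n + 1)).comp g))

/-- `M` is Gorenstein injective relative to the test class `𝒯` : `M` is the cokernel
`Coker (I_1 → I_0)` of a `Hom(𝒯, -)`-exact exact complex of injective modules. -/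
def GorensteinRelInjective (𝒯 : ModuleCat.{u} R → Prop) (M : ModuleCat.{u} R) : Prop :=
  ∃ (I : ℤ → ModuleCat.{u} R) (d : ∀ n : ℤ, I n →ₗ[R] I (n + 1)) (π : I 0 →ₗ[R] M),
    IsTotallyAcyclicInjComplex R 𝒯 I d ∧
    Function.Surjective π ∧ Function.Exact (d (-1)) π

/-- Gorenstein weak injective modules: the test class is that of weak injective modules. -/
def GorensteinWeakInjective (M : ModuleCat.{u} R) : Prop :=
  GorensteinRelInjective R (WeakInjective R) M

/-- Gorenstein injective modules: the test class is that of injective modules. -/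
def GorensteinInjective (M : ModuleCat.{u} R) : Prop :=
  GorensteinRelInjective R (fun E => Module.Injective R E) M

/-- The data of an exact sequence `0 → M → G^0 → ⋯ → G^n → 0` (the modules `G^i` for
`i > n` being trivial). -/
def IsFiniteCoresolution (M : ModuleCat.{u} R) (n : ℕ) (G : ℕ → ModuleCat.{u} R)
    (d : ∀ i, G i →ₗ[R] G (i + 1)) (ε : M →ₗ[R] G 0) : Prop :=
  Function.Injective ε ∧ Function.Exact ε (d 0) ∧
  (∀ i, Function.Exact (d i) (d (i + 1))) ∧
  (∀ i, n < i → ∀ x : G i, x = 0)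

/-- `Gwid_R M ≤ n` : `M` has a coresolution of length `n` by Gorenstein weak injective
modules. -/
def GwidLE (M : ModuleCat.{u} R) (n : ℕ) : Prop :=
  ∃ (G : ℕ → ModuleCat.{u} R) (d : ∀ i, G i →ₗ[R] G (i + 1)) (ε : M →ₗ[R] G 0),
    IsFiniteCoresolution R M n G d ε ∧ ∀ i, GorensteinWeakInjective R (G i)

/-- The Gorenstein weak injective dimension, as an element of `ℕ∞`. -/
def Gwid (M : ModuleCat.{u} R) : ℕ∞ :=
  sInf {c : ℕ∞ | ∃ n : ℕ, c = n ∧ GwidLE R M n}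

/-- `Gid_R M ≤ n`, via coresolutions by Gorenstein injective modules. -/
def GidLE (M : ModuleCat.{u} R) (n : ℕ) : Prop :=
  ∃ (G : ℕ → ModuleCat.{u} R) (d : ∀ i, G i →ₗ[R] G (i + 1)) (ε : M →ₗ[R] G 0),
    IsFiniteCoresolution R M n G d ε ∧ ∀ i, GorensteinInjective R (G i)

/-- The Gorenstein injective dimension, as an element of `ℕ∞`. -/
def Gid (M : ModuleCat.{u} R) : ℕ∞ :=
  sInf {c : ℕ∞ | ∃ n : ℕ, c = n ∧ GidLE R M n}

/-- `id_R M ≤ n`, via coresolutions by injective modules. -/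
def IdLE (M : ModuleCat.{u} R) (n : ℕ) : Prop :=
  ∃ (G : ℕ → ModuleCat.{u} R) (d : ∀ i, G i →ₗ[R] G (i + 1)) (ε : M →ₗ[R] G 0),
    IsFiniteCoresolution R M n G d ε ∧ ∀ i, Module.Injective R (G i)

/-- The injective dimension, as an element of `ℕ∞`. -/
def Idim (M : ModuleCat.{u} R) : ℕ∞ :=
  sInf {c : ℕ∞ | ∃ n : ℕ, c = n ∧ IdLE R M n}

/-- The data of an exact sequence `0 → P_n → ⋯ → P_0 → M → 0`. -/
def IsFiniteResolution (M : ModuleCat.{u} R) (n : ℕ) (P : ℕ → ModuleCat.{u} R)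
    (d : ∀ i, P (i + 1) →ₗ[R] P i) (ε : P 0 →ₗ[R] M) : Prop :=
  Function.Surjective ε ∧ Function.Exact (d 0) ε ∧
  (∀ i, Function.Exact (d (i + 1)) (d i)) ∧
  (∀ i, n < i → ∀ x : P i, x = 0)

/-- `pd_R M ≤ n`, via resolutions by projective modules. -/
def PdLE (M : ModuleCat.{u} R) (n : ℕ) : Prop :=
  ∃ (P : ℕ → ModuleCat.{u} R) (d : ∀ i, P (i + 1) →ₗ[R] P i) (ε : P 0 →ₗ[R] M),
    IsFiniteResolution R M n P d ε ∧ ∀ i, Module.Projective R (P i)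

end

variable (R : Type u) [Ring R]

/-- A short exact sequence `0 → L → M → N → 0` of `R`-modules. -/
def ShortExactSeq (L M N : ModuleCat.{u} R) (f : L →ₗ[R] M) (g : M →ₗ[R] N) : Prop :=
  Function.Injective f ∧ Function.Surjective g ∧ Function.Exact f g

/-- Exactness of `0 → Hom(C, X) → Hom(B, X) → Hom(A, X) → 0` induced by
`0 → A → B → C → 0`. -/
def HomContraExact (X : ModuleCat.{u} R) {A B C : ModuleCat.{u} R}
    (f : A →ₗ[R] B) (g : B →ₗ[R] C) : Prop :=
  Function.Injective (fun h : C →ₗ[R] X => h.comp g) ∧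
  Function.Exact (fun h : C →ₗ[R] X => h.comp g) (fun h : B →ₗ[R] X => h.comp f) ∧
  Function.Surjective (fun h : B →ₗ[R] X => h.comp f)

/-- A short exact sequence is `GWI`-copure exact if `Hom_R(-, X)` leaves it exact for
every Gorenstein weak injective module `X`. -/
def GWICopureExact {A B C : ModuleCat.{u} R} (f : A →ₗ[R] B) (g : B →ₗ[R] C) : Prop :=
  ShortExactSeq R A B C f g ∧
  ∀ X : ModuleCat.{u} R, GorensteinWeakInjective R X → HomContraExact R X f g

/-- `M` is `GWI`-copure injective if `Hom_R(-, M)` is exact on every `GWI`-copure exact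
sequence. -/
def GWICopureInjectiveMod (M : ModuleCat.{u} R) : Prop :=
  ∀ (A B C : ModuleCat.{u} R) (f : A →ₗ[R] B) (g : B →ₗ[R] C),
    GWICopureExact R f g → HomContraExact R M f g

/-- `φ : M → G` is a Gorenstein weak injective preenvelope of `M`. -/
def GWIPreenvelope (M G : ModuleCat.{u} R) (φ : M →ₗ[R] G) : Prop :=
  GorensteinWeakInjective R G ∧
  ∀ G' : ModuleCat.{u} R, GorensteinWeakInjective R G' →
    ∀ f : M →ₗ[R] G', ∃ g : G →ₗ[R] G', g.comp φ = f

/-- A `WI`-pure Tate injective resolution of `M` : an injective resolution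
`0 → M → E^0 → E^1 → ⋯`, a `WI`-pure exact complex `T` of injectives, and a chain map
`u : E → T` which is an isomorphism in all sufficiently large degrees. -/
def WIPureTateInjectiveResolution (M : ModuleCat.{u} R)
    (E : ℕ → ModuleCat.{u} R) (dE : ∀ n, E n →ₗ[R] E (n + 1)) (ε : M →ₗ[R] E 0)
    (T : ℤ → ModuleCat.{u} R) (dT : ∀ n : ℤ, T n →ₗ[R] T (n + 1))
    (u : ∀ n : ℕ, E n →ₗ[R] T n) : Prop :=
  (∀ n, Module.Injective R (E n)) ∧ Function.Injective ε ∧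
  Function.Exact ε (dE 0) ∧ (∀ n, Function.Exact (dE n) (dE (n + 1))) ∧
  IsTotallyAcyclicInjComplex R (WeakInjective R) T dT ∧
  (∀ n : ℕ, (dT n).comp (u n) = (u (n + 1)).comp (dE n)) ∧
  ∃ N : ℕ, ∀ n, N ≤ n → Function.Bijective (u n)

/-- Vanishing of the relative Tate cohomology `Êxt^i_GWI(N, M)` for all `i ∈ ℤ`,
computed from the `WI`-pure exact complex `T` : the complex `Hom_R(N, T)` is exact. -/
def ExtHatVanishesAll (N : ModuleCat.{u} R) (T : ℤ → ModuleCat.{u} R)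
    (dT : ∀ n : ℤ, T n →ₗ[R] T (n + 1)) : Prop :=
  ∀ n : ℤ, Function.Exact (fun g : N →ₗ[R] T n => (dT n).comp g)
    (fun g : N →ₗ[R] T (n + 1) => (dT (n + 1)).comp g)

/-!
Over a left Noetherian ring every finitely generated module has a resolution by finitely
generated free modules, so every `R ⧸ I` is super finitely presented; `Ext^1(R ⧸ I, W) = 0` then
lets maps `I → W` extend to `R`, and Baer's criterion makes weak injective modules injective.
An injective module `E` is Gorenstein weak injective, being a cokernel in the contractible
complex `⋯ → E × E → E × E → ⋯` with differential `(x, y) ↦ (y, 0)`.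

Conversely, a Gorenstein weak injective module `M` that is weak injective embeds into the next
term `I¹` of its complete resolution, and `Hom(M, -)`-exactness splits that embedding through
`I⁰`, so `M` is injective. For an ascending chain of left ideals `c n`, choose injectives
`E n ⊇ R ⧸ c n`. The eventually zero sequences in `∏ E n` form a weak injective module, since a
map from a finitely generated module lands in a finite, hence injective, subproduct. Being
injective, it receives an extension to `R` of the map `⋃ c n → ∏ E n`; the support bound of the
image of `1` then forces the chain to stop.
-/

theorem Function.exact_self_of_homotopy {M : Type*} [AddCommGroup M] {D s : M → M}
    (hD : ∀ x, D (D x) = 0) (hs₀ : s 0 = 0) (hs : ∀ x, D (s x) + s (D x) = x) :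
    Function.Exact D D := fun x =>
  ⟨fun hx => ⟨s x, by simpa [hx, hs₀] using hs x⟩, by rintro ⟨y, rfl⟩; exact hD y⟩

section Modules

variable {R : Type u} [Ring R]

instance Module.Injective.prod {A B : Type u} [AddCommGroup A] [Module R A] [AddCommGroup B]
    [Module R B] [Module.Injective R A] [Module.Injective R B] : Module.Injective R (A × B) :=
  ⟨fun _ _ _ _ _ _ i hi g => by
    obtain ⟨g₁, hg₁⟩ := Module.Injective.out i hi (LinearMap.fst R A B ∘ₗ g)
    obtain ⟨g₂, hg₂⟩ := Module.Injective.out i hi (LinearMap.snd R A B ∘ₗ g)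
    exact ⟨g₁.prod g₂, fun x => Prod.ext (hg₁ x) (hg₂ x)⟩⟩

theorem Module.Injective.of_retract {Q M : Type u} [AddCommGroup Q] [Module R Q]
    [AddCommGroup M] [Module R M] [Module.Injective R Q] (σ : M →ₗ[R] Q) (π : Q →ₗ[R] M)
    (hπσ : π ∘ₗ σ = LinearMap.id) : Module.Injective R M :=
  ⟨fun _ _ _ _ _ _ i hi g => by
    obtain ⟨h, hh⟩ := Module.Injective.out i hi (σ ∘ₗ g)
    exact ⟨π ∘ₗ h, fun x => by simp [hh x, ← LinearMap.comp_apply π σ, hπσ]⟩⟩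

theorem Module.Injective.exists_comp_eq_of_ker_le {A B Q : Type u}
    [AddCommGroup A] [Module R A] [AddCommGroup B] [Module R B] [AddCommGroup Q] [Module R Q]
    [Module.Injective R Q] (i : A →ₗ[R] B) (f : A →ₗ[R] Q) (h : LinearMap.ker i ≤ LinearMap.ker f) :
    ∃ g : B →ₗ[R] Q, g ∘ₗ i = f := by
  obtain ⟨g, hg⟩ := Module.Injective.extension_property R Q _ _ (LinearMap.range i).subtype
    Subtype.val_injective ((LinearMap.ker i).liftQ f h ∘ₗ i.quotKerEquivRange.symm.toLinearMap)
  refine ⟨g, LinearMap.ext fun x => ?_⟩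
  simpa [LinearMap.quotKerEquivRange_symm_apply_image] using
    LinearMap.congr_fun hg ⟨i x, LinearMap.mem_range_self i x⟩

end Modules

section ExtOne

variable {R : Type u} [Ring R] (F : ℕ → ModuleCat.{u} R) (d : ∀ n, F (n + 1) →ₗ[R] F n)

noncomputable def chainComplexOfExact (hd : ∀ n, Function.Exact (d (n + 1)) (d n)) :
    ChainComplex (ModuleCat.{u} R) ℕ :=
  ChainComplex.of F (fun n => ModuleCat.ofHom (d n)) fun n => by
    ext x
    exact (hd n).apply_apply_eq_zero x

lemma chainComplexOfExact_d (hd : ∀ n, Function.Exact (d (n + 1)) (d n)) (n : ℕ) :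
    (chainComplexOfExact F d hd).d (n + 1) n = ModuleCat.ofHom (d n) :=
  ChainComplex.of_d (X := F) (d := fun n => ModuleCat.ofHom (d n)) n

lemma chainComplexOfExact_exactAt_succ (hd : ∀ n, Function.Exact (d (n + 1)) (d n)) (n : ℕ) :
    (chainComplexOfExact F d hd).ExactAt (n + 1) := by
  rw [HomologicalComplex.exactAt_iff' _ (n + 2) (n + 1) n (by simp) (by simp),
    ShortComplex.moduleCat_exact_iff]
  intro x (hx : (chainComplexOfExact F d hd).d (n + 1) n x = 0)
  rw [chainComplexOfExact_d] at hx
  obtain ⟨y, rfl⟩ := (hd n x).1 hx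
  exact ⟨y, by simp [chainComplexOfExact_d]; rfl⟩

noncomputable def projectiveResolutionOfExact (hd : ∀ n, Function.Exact (d (n + 1)) (d n))
    (N : ModuleCat.{u} R) (ε : F 0 →ₗ[R] N)
    (hproj : ∀ n, Module.Projective R (F n)) (hε : Function.Surjective ε)
    (hd₀ : Function.Exact (d 0) ε) : ProjectiveResolution N where
  complex := chainComplexOfExact F d hd
  projective n := (IsProjective.iff_projective (R := R) (P := F n)).1 (hproj n)
  π := (ChainComplex.toSingle₀Equiv _ _).symm ⟨ModuleCat.ofHom ε, by
    ext x
    rw [chainComplexOfExact_d]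
    exact hd₀.apply_apply_eq_zero x⟩
  quasiIso := ⟨fun n => by
    cases n with
    | zero =>
      rw [ChainComplex.quasiIsoAt₀_iff, ShortComplex.quasiIso_iff_of_zeros' _ rfl rfl rfl]
      constructor
      · rw [ShortComplex.moduleCat_exact_iff]
        intro (x : F 0) (hx : ε x = 0)
        obtain ⟨y, rfl⟩ := (hd₀ x).1 hx
        exact ⟨y, by simp [chainComplexOfExact_d]; rfl⟩
      · exact (ModuleCat.epi_iff_surjective (ModuleCat.ofHom ε)).2 hε
    | succ n =>
      rw [quasiIsoAt_iff_exactAt' _ _ (ChainComplex.exactAt_succ_single_obj _ n)]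
      exact chainComplexOfExact_exactAt_succ F d hd n⟩

lemma extVanish_one_iff_forall_exists_comp_eq (hd : ∀ n, Function.Exact (d (n + 1)) (d n))
    (N M : ModuleCat.{u} R) (ε : F 0 →ₗ[R] N)
    (hproj : ∀ n, Module.Projective R (F n)) (hε : Function.Surjective ε)
    (hd₀ : Function.Exact (d 0) ε) :
    ExtVanish R 1 N M ↔
      ∀ f : F 1 →ₗ[R] M, f ∘ₗ d 1 = 0 → ∃ g : F 0 →ₗ[R] M, g ∘ₗ d 0 = f := by
  let P := projectiveResolutionOfExact F d hd N ε hproj hε hd₀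
  let K := P.complex.linearYonedaObj ℤ M
  have hK (n : ℕ) (f : F n →ₗ[R] M) :
      K.d n (n + 1) (ModuleCat.ofHom f) = ModuleCat.ofHom (f ∘ₗ d n) := by
    change P.complex.d (n + 1) n ≫ ModuleCat.ofHom f = _
    rw [show P.complex.d (n + 1) n = ModuleCat.ofHom (d n) from chainComplexOfExact_d F d hd n]
    rfl
  rw [ExtVanish, ← ModuleCat.isZero_iff_subsingleton, (P.isoExt 1 M).isZero_iff,
    ← HomologicalComplex.exactAt_iff_isZero_homology,
    HomologicalComplex.exactAt_iff' K 0 1 2 (by simp) (by simp), ShortComplex.moduleCat_exact_iff]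
  constructor
  · intro h f hf
    obtain ⟨g, hg⟩ := h (ModuleCat.ofHom f) ((hK 1 f).trans (by rw [hf]; rfl))
    exact ⟨g.hom, congrArg ModuleCat.Hom.hom ((hK 0 g.hom).symm.trans hg)⟩
  · intro h f hf
    obtain ⟨g, hg⟩ := h f.hom (congrArg ModuleCat.Hom.hom ((hK 1 f.hom).symm.trans hf))
    exact ⟨ModuleCat.ofHom g, (hK 0 g).trans (by rw [hg]; rfl)⟩

end ExtOne

section NoetherianResolution

variable {R : Type u} [Ring R]

noncomputable def finiteFreeCover (M : Type u) [AddCommGroup M] [Module R M] [Module.Finite R M] :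
    Σ' (k : ℕ) (c : (Fin k → R) →ₗ[R] M), Function.Surjective c :=
  Classical.choice <|
    let ⟨k, c, hc⟩ := Module.Finite.exists_fin' R M
    ⟨⟨k, c, hc⟩⟩

variable [IsNoetherianRing R] (N F₀ : ModuleCat.{u} R) [Module.Finite R F₀] (ε : F₀ →ₗ[R] N)

/-- Level `n` holds the module `F n` of the resolution together with the kernel of
`F n → F (n - 1)` (of `ε` when `n = 0`), which `F (n + 1)` covers freely. -/
noncomputable def resolutionTower :
    ℕ → Σ' (F : ModuleCat.{u} R) (K : Submodule R F), Module.Finite R K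
  | 0 => ⟨F₀, LinearMap.ker ε, inferInstance⟩
  | n + 1 =>
    let ⟨_, K, _⟩ := resolutionTower n
    let c := finiteFreeCover (R := R) K
    ⟨ModuleCat.of R (Fin c.1 → R), LinearMap.ker c.2.1, inferInstance⟩

noncomputable def resolutionCover (n : ℕ) :
    (resolutionTower N F₀ ε (n + 1)).1 →ₗ[R] (resolutionTower N F₀ ε n).2.1 :=
  have := (resolutionTower N F₀ ε n).2.2
  (finiteFreeCover (R := R) (resolutionTower N F₀ ε n).2.1).2.1

lemma resolutionCover_surjective (n : ℕ) : Function.Surjective (resolutionCover N F₀ ε n) :=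
  have := (resolutionTower N F₀ ε n).2.2
  (finiteFreeCover (R := R) (resolutionTower N F₀ ε n).2.1).2.2

noncomputable def resolutionD (n : ℕ) :
    (resolutionTower N F₀ ε (n + 1)).1 →ₗ[R] (resolutionTower N F₀ ε n).1 :=
  (resolutionTower N F₀ ε n).2.1.subtype ∘ₗ resolutionCover N F₀ ε n

lemma ker_resolutionD (n : ℕ) :
    LinearMap.ker (resolutionD N F₀ ε n) = (resolutionTower N F₀ ε (n + 1)).2.1 := by
  rw [resolutionD, LinearMap.ker_comp, Submodule.ker_subtype, Submodule.comap_bot]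
  rfl

lemma range_resolutionD (n : ℕ) :
    LinearMap.range (resolutionD N F₀ ε n) = (resolutionTower N F₀ ε n).2.1 := by
  rw [resolutionD, LinearMap.range_comp,
    LinearMap.range_eq_top.2 (resolutionCover_surjective N F₀ ε n), Submodule.map_subtype_top]

lemma resolutionD_exact (n : ℕ) :
    Function.Exact (resolutionD N F₀ ε (n + 1)) (resolutionD N F₀ ε n) := by
  rw [LinearMap.exact_iff, ker_resolutionD, range_resolutionD]

lemma resolutionD_zero_exact : Function.Exact (resolutionD N F₀ ε 0) ε :=
  LinearMap.exact_iff.mpr (range_resolutionD N F₀ ε 0).symm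

lemma resolutionTower_finite (n : ℕ) : Module.Finite R (resolutionTower N F₀ ε n).1 := by
  cases n with
  | zero => exact ‹Module.Finite R F₀›
  | succ n => exact inferInstanceAs (Module.Finite R (Fin _ → R))

variable [Module.Projective R F₀]

lemma resolutionTower_projective (n : ℕ) : Module.Projective R (resolutionTower N F₀ ε n).1 := by
  cases n with
  | zero => exact ‹Module.Projective R F₀›
  | succ n => exact inferInstanceAs (Module.Projective R (Fin _ → R))

variable {N F₀ ε}

theorem superFinitelyPresented_of_surjective (hε : Function.Surjective ε) :
    SuperFinitelyPresented R N :=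
  ⟨fun n => (resolutionTower N F₀ ε n).1, resolutionD N F₀ ε, ε, resolutionTower_finite N F₀ ε,
    resolutionTower_projective N F₀ ε, hε, resolutionD_zero_exact N F₀ ε, resolutionD_exact N F₀ ε⟩

theorem exists_extend_ker_of_extVanish_one {M : ModuleCat.{u} R} (hε : Function.Surjective ε)
    (hext : ExtVanish R 1 N M) (f : LinearMap.ker ε →ₗ[R] M) :
    ∃ g : F₀ →ₗ[R] M, g ∘ₗ (LinearMap.ker ε).subtype = f := by
  let c := resolutionCover N F₀ ε 0
  have hfc : (f ∘ₗ c) ∘ₗ resolutionD N F₀ ε 1 = 0 := by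
    ext x
    exact congrArg f (resolutionCover N F₀ ε 1 x).2 |>.trans f.map_zero
  obtain ⟨g, hg⟩ := (extVanish_one_iff_forall_exists_comp_eq _ _ (resolutionD_exact N F₀ ε) N M ε
    (resolutionTower_projective N F₀ ε) hε (resolutionD_zero_exact N F₀ ε)).1 hext (f ∘ₗ c) hfc
  refine ⟨g, LinearMap.ext fun x => ?_⟩
  obtain ⟨y, rfl⟩ := resolutionCover_surjective N F₀ ε 0 x
  exact LinearMap.congr_fun hg y

end NoetherianResolution

theorem injective_of_weakInjective {R : Type u} [Ring R] [IsNoetherianRing R]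
    {W : ModuleCat.{u} R} (hW : WeakInjective R W) : Module.Injective R W := by
  refine Module.Baer.injective fun I f => ?_
  let ε : ModuleCat.of R R →ₗ[R] ModuleCat.of R (R ⧸ I) := I.mkQ
  have hker : LinearMap.ker ε = I := Submodule.ker_mkQ I
  have hε : Function.Surjective ε := Submodule.mkQ_surjective I
  obtain ⟨g, hg⟩ := exists_extend_ker_of_extVanish_one hε
    (hW _ (superFinitelyPresented_of_surjective hε)) (f ∘ₗ Submodule.inclusion hker.le)
  exact ⟨g, fun x hx => LinearMap.congr_fun hg ⟨x, hker.symm ▸ hx⟩⟩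

section GorensteinRelInjective

variable {R : Type u} [Ring R]

theorem gorensteinRelInjective_of_injective (𝒯 : ModuleCat.{u} R → Prop) {E : ModuleCat.{u} R}
    [Module.Injective R E] : GorensteinRelInjective R 𝒯 E := by
  let D : E × E →ₗ[R] E × E := LinearMap.inl R E E ∘ₗ LinearMap.snd R E E
  let s : E × E →ₗ[R] E × E := LinearMap.inr R E E ∘ₗ LinearMap.fst R E E
  have hD (x : E × E) : D (D x) = 0 := rfl
  have hs (x : E × E) : D (s x) + s (D x) = x := by simp [D, s]
  refine ⟨fun _ => ModuleCat.of R (E × E), fun _ => D, LinearMap.snd R E E,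
    ⟨fun _ => inferInstanceAs (Module.Injective R (E × E)),
      fun _ => Function.exact_self_of_homotopy hD s.map_zero hs,
      fun V _ _ => Function.exact_self_of_homotopy (s := (s ∘ₗ ·))
        (fun g => LinearMap.ext fun v => hD (g v)) (LinearMap.comp_zero s)
        (fun g => LinearMap.ext fun v => hs (g v))⟩,
    fun w => ⟨(0, w), rfl⟩, fun x => ⟨fun hx => ⟨(0, x.1), Prod.ext rfl hx.symm⟩, ?_⟩⟩
  rintro ⟨y, rfl⟩
  rfl

theorem injective_of_gorensteinRelInjective {𝒯 : ModuleCat.{u} R → Prop} {M : ModuleCat.{u} R}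
    (hG : GorensteinRelInjective R 𝒯 M) (hM : 𝒯 M) : Module.Injective R M := by
  obtain ⟨I, d, π, ⟨hinj, hd, hhom⟩, hπ, hdπ⟩ := hG
  let δ : I (-1) →ₗ[R] I 0 := d (-1)
  have hd₀ : Function.Exact δ (d 0) := hd (-1)
  let ι : M →ₗ[R] I 1 :=
    (LinearMap.range δ).liftQ (d 0) (hd₀ · |>.mpr) ∘ₗ
      ((hdπ : Function.Exact δ π).linearEquivOfSurjective hπ).symm.toLinearMap
  have hιπ (x : I 0) : ι (π x) = d 0 x := by simp [ι]; rfl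
  have hι : Function.Injective ι :=
    (LinearMap.injective_range_liftQ_of_exact hd₀).comp (LinearEquiv.injective _)
  obtain ⟨σ, hσ⟩ := (hhom M hM 0 ι).1 <| LinearMap.ext fun w => by
    obtain ⟨x, rfl⟩ := hπ w
    simp only [LinearMap.comp_apply, hιπ, LinearMap.zero_apply]
    exact (hd 0).apply_apply_eq_zero x
  have := hinj 0
  refine Module.Injective.of_retract σ π (LinearMap.ext fun w => hι ?_)
  simp only [LinearMap.comp_apply, hιπ, LinearMap.id_apply]
  exact LinearMap.congr_fun hσ w

end GorensteinRelInjective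

section EventuallyZero

variable (R : Type u) [Ring R] (E : ℕ → Type u) [∀ n, AddCommGroup (E n)] [∀ n, Module R (E n)]

def vanishingFrom (N : ℕ) : Submodule R (∀ n, E n) :=
  Submodule.pi {m | N ≤ m} fun _ => ⊥

lemma mem_vanishingFrom {N : ℕ} {v : ∀ n, E n} :
    v ∈ vanishingFrom R E N ↔ ∀ m, N ≤ m → v m = 0 := by
  simp [vanishingFrom, Submodule.mem_pi]

def eventuallyZero : Submodule R (∀ n, E n) where
  carrier := {v | ∃ N, ∀ m, N ≤ m → v m = 0}
  add_mem' := by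
    rintro a b ⟨Na, ha⟩ ⟨Nb, hb⟩
    exact ⟨max Na Nb, fun m hm => by
      simp [ha m (le_of_max_le_left hm), hb m (le_of_max_le_right hm)]⟩
  zero_mem' := ⟨0, fun _ _ => rfl⟩
  smul_mem' := by
    rintro r v ⟨N, hN⟩
    exact ⟨N, fun m hm => by simp [hN m hm]⟩

lemma vanishingFrom_le_eventuallyZero (N : ℕ) :
    vanishingFrom R E N ≤ eventuallyZero R E :=
  fun _ hv => ⟨N, (mem_vanishingFrom R E).1 hv⟩

instance injective_vanishingFrom [∀ n, Module.Injective R (E n)] (N : ℕ) :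
    Module.Injective R (vanishingFrom R E N) := by
  let trunc : (∀ n, E n) →ₗ[R] vanishingFrom R E N :=
    LinearMap.codRestrict _ (LinearMap.pi fun m => if N ≤ m then 0 else LinearMap.proj m)
      fun v => (mem_vanishingFrom R E).2 fun m hm => by simp [hm]
  refine Module.Injective.of_retract (vanishingFrom R E N).subtype trunc
    (LinearMap.ext fun v => Subtype.ext <| funext fun m => ?_)
  by_cases hm : N ≤ m
  · simp [trunc, hm, (mem_vanishingFrom R E).1 v.2 m hm]
  · simp [trunc, hm]

lemma exists_mem_vanishingFrom_of_finite {P : Type u} [AddCommGroup P] [Module R P]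
    [Module.Finite R P] (f : P →ₗ[R] eventuallyZero R E) :
    ∃ N, ∀ x, (f x : ∀ n, E n) ∈ vanishingFrom R E N := by
  obtain ⟨k, s, hs⟩ := Module.Finite.exists_fin (R := R) (M := P)
  choose B hB using fun i : Fin k => (f (s i)).2
  refine ⟨Finset.univ.sup B, fun x => ?_⟩
  have hspan : Submodule.span R (Set.range s) ≤
      (vanishingFrom R E (Finset.univ.sup B)).comap ((eventuallyZero R E).subtype ∘ₗ f) := by
    rw [Submodule.span_le]
    rintro _ ⟨i, rfl⟩
    exact (mem_vanishingFrom R E).2 fun m hm =>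
      hB i m ((Finset.le_sup (Finset.mem_univ i)).trans hm)
  exact hspan (hs ▸ Submodule.mem_top)

theorem weakInjective_eventuallyZero [∀ n, Module.Injective R (E n)] :
    WeakInjective R (ModuleCat.of R (eventuallyZero R E)) := by
  rintro N ⟨F, d, ε, hfin, hproj, hε, hd₀, hd⟩
  refine (extVanish_one_iff_forall_exists_comp_eq F d hd N _ ε hproj hε hd₀).2 fun f hf => ?_
  obtain ⟨N₀, hN₀⟩ := exists_mem_vanishingFrom_of_finite R E f
  let f₀ : F 1 →ₗ[R] vanishingFrom R E N₀ :=
    LinearMap.codRestrict _ ((eventuallyZero R E).subtype ∘ₗ f) hN₀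
  obtain ⟨g, hg⟩ := Module.Injective.exists_comp_eq_of_ker_le (d 0) f₀ fun x hx => by
    obtain ⟨y, rfl⟩ := (hd 0 x).1 hx
    exact Subtype.ext (congrArg Subtype.val (LinearMap.congr_fun hf y) :)
  refine ⟨Submodule.inclusion (vanishingFrom_le_eventuallyZero R E N₀) ∘ₗ g,
    LinearMap.ext fun x => ?_⟩
  exact Subtype.ext (congrArg Subtype.val (LinearMap.congr_fun hg x) :)

end EventuallyZero

theorem isNoetherianRing_of_forall_weakInjective_injective {R : Type u} [Ring R]
    (h : ∀ W : ModuleCat.{u} R, WeakInjective R W → Module.Injective R W) :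
    IsNoetherianRing R := by
  refine monotone_stabilizes_iff_noetherian.mp fun c => ?_
  let Q (n : ℕ) := ModuleCat.of R (R ⧸ c n)
  let E (n : ℕ) := Injective.under (Q n)
  have hE (n : ℕ) : Module.Injective R (E n) :=
    have : Injective (ModuleCat.of R (E n)) := inferInstanceAs (Injective (E n))
    Module.injective_module_of_injective_object R _
  have hι (n : ℕ) : Function.Injective (Injective.ι (Q n)) :=
    (ModuleCat.mono_iff_injective _).1 inferInstance
  let S := eventuallyZero R fun n => E n
  have hS : Module.Injective R S := h _ (weakInjective_eventuallyZero R _)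
  let Φ : R →ₗ[R] ∀ n, E n := LinearMap.pi fun n => (Injective.ι (Q n)).hom ∘ₗ (c n).mkQ
  have hΦ (x : R) (hx : x ∈ ⨆ n, c n) : Φ x ∈ S := by
    obtain ⟨k, hk⟩ := (Submodule.mem_iSup_of_chain c x).1 hx
    refine ⟨k, fun m hm => ?_⟩
    change Injective.ι (Q m) ((c m).mkQ x) = 0
    rw [Submodule.mkQ_apply, (Submodule.Quotient.mk_eq_zero _).2 (c.monotone hm hk), map_zero]
  obtain ⟨ψ, hψ⟩ := Module.Baer.of_injective hS (⨆ n, c n)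
    (LinearMap.codRestrict S (Φ ∘ₗ (⨆ n, c n).subtype) fun x => hΦ x.1 x.2)
  obtain ⟨N, hN⟩ := (ψ 1).2
  have hsup : ⨆ n, c n ≤ c N := fun x hx => by
    have hψx : ψ x = x • ψ 1 := by rw [← map_smul, smul_eq_mul, mul_one]
    have : Injective.ι (Q N) ((c N).mkQ x) = 0 :=
      (congrArg (fun v : S => (v : ∀ n, E n) N) ((hψ x hx).symm.trans hψx)).trans
        (by simp [hN N le_rfl])
    exact (Submodule.Quotient.mk_eq_zero _).1 (hι N (this.trans (map_zero _).symm))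
  exact ⟨N, fun m hm => le_antisymm (c.monotone hm) ((le_iSup (fun n => c n) m).trans hsup)⟩

/-- `R` is left Noetherian iff every weak injective module is Gorenstein weak injective. -/
theorem isNoetherianRing_iff_weakInjective_gorensteinWeakInjective :
    IsNoetherianRing R ↔
      ∀ W : ModuleCat.{u} R, WeakInjective R W → GorensteinWeakInjective R W :=
  ⟨fun _ _ hW =>
    have := injective_of_weakInjective hW
    gorensteinRelInjective_of_injective _,
    fun h => isNoetherianRing_of_forall_weakInjective_injective fun W hW =>
      injective_of_gorensteinRelInjective (h W hW) hW⟩
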